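/- arXiv:0812.0659 — 4 statements merged into one kernel-verified Lean document; each statement's English description precedes it below -/
import Mathlib

section
/- Let T be a unitary finite rooted edge-weighted tree, let v be a real number in [0,1], and let A be a set of nodes of T such that no leaf of T descends from two distinct members of A and every a in A has a designated child c(a) whose connecting arc from a is labeled v (the same v for all a in A). Let beta be the sum of the path values of all leaves descending from some member of A, and let alpha be the sum of the path values of all leaves descending from some node c(a) with a in A. Then alpha = v * beta; in particular, if beta > 0 then alpha / beta = v. (This is the key computation establishing that causal probabilities entail the corresponding conditional probabilities in the proof of the Coherency Condition theorem.) -/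
/-- A finite rooted edge-weighted tree: a root node together with a finite
list of (weight, subtree) pairs. -/
inductive WTree : Type where
  | node : List (ℝ × WTree) → WTree

namespace WTree

/-- The subtree of `t` at position `p` (a list of child indices), if it exists. -/
def subtree? : WTree → List ℕ → Option WTree
  | t, [] => some t
  | .node cs, i :: p =>
    match cs[i]? with
    | some wc => subtree? wc.2 p
    | none => none

/-- The path value of the position `p`: the product of the weights of the arcs on
the path from the root to `p` (the path value of the root is `1`). -/
noncomputable def pv : WTree → List ℕ → ℝ
  | _, [] => 1
  | .node cs, i :: p =>
    match cs[i]? with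
    | some wc => wc.1 * pv wc.2 p
    | none => 0

/-- `p` is a node of `t`. -/
def IsNode (t : WTree) (p : List ℕ) : Prop := (subtree? t p).isSome

/-- `p` is a leaf of `t` (a node with no children). -/
def IsLeaf (t : WTree) (p : List ℕ) : Prop := subtree? t p = some (.node [])

/-- `t` is unitary: every arc is labeled with a real number in `[0,1]` and,
for every node with at least one child, the labels of the arcs leaving that
node sum to `1`. -/
def Unitary (t : WTree) : Prop :=
  ∀ p cs, subtree? t p = some (.node cs) →
    (∀ wc ∈ cs, 0 ≤ wc.1 ∧ wc.1 ≤ 1) ∧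
    (cs ≠ [] → (cs.map Prod.fst).sum = 1)

/-- The label of the arc leaving node `p` towards its `i`-th child, if it exists. -/
def arcWeight (t : WTree) (p : List ℕ) (i : ℕ) : Option ℝ :=
  match subtree? t p with
  | some (.node cs) => (cs[i]?).map Prod.fst
  | none => none

end WTree

open WTree

/-! In a unitary tree the path values of the leaves below a node `a` sum to `pv a`: below `a`
the weights multiply by `pv a`, and in the subtree itself they sum to `1` by induction, since
the labels at every inner node sum to `1`. As no leaf lies below two members of `A`, this gives
`beta = ∑ a ∈ A, pv a`; the nodes `c a` inherit that disjointness, so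
`alpha = ∑ a ∈ A, pv (c a) = ∑ a ∈ A, v * pv a = v * beta`. -/

namespace WTree

theorem sizeOf_lt_of_mem {cs : List (ℝ × WTree)} {wc : ℝ × WTree} (h : wc ∈ cs) :
    sizeOf wc.2 < sizeOf (node cs) := by
  have := List.sizeOf_lt_of_mem h
  obtain ⟨w, s⟩ := wc
  simp only [node.sizeOf_spec, Prod.mk.sizeOf_spec] at this ⊢
  omega

@[induction_eliminator]
theorem ind {P : WTree → Prop}
    (node : ∀ cs : List (ℝ × WTree), (∀ wc ∈ cs, P wc.2) → P (.node cs)) : ∀ t, P t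
  | .node cs => node cs fun wc _ => ind node wc.2
termination_by t => sizeOf t
decreasing_by exact sizeOf_lt_of_mem ‹_›

def leaves : WTree → Finset (List ℕ)
  | .node cs =>
    if cs = [] then {[]}
    else Finset.univ.biUnion fun i : Fin cs.length =>
      (leaves cs[i.val].2).map ⟨(i.val :: ·), List.cons_injective⟩
termination_by t => sizeOf t
decreasing_by exact sizeOf_lt_of_mem (List.getElem_mem _)

theorem subtree?_cons (cs : List (ℝ × WTree)) (i : ℕ) (p : List ℕ) :
    subtree? (node cs) (i :: p) = cs[i]?.bind fun wc => subtree? wc.2 p := by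
  cases h : cs[i]? <;> simp [subtree?, h]

theorem pv_cons {cs : List (ℝ × WTree)} {i : ℕ} (hi : i < cs.length) (p : List ℕ) :
    pv (node cs) (i :: p) = cs[i].1 * pv cs[i].2 p := by
  simp [pv, List.getElem?_eq_getElem hi]

theorem subtree?_append (t : WTree) (p q : List ℕ) :
    subtree? t (p ++ q) = (subtree? t p).bind fun s => subtree? s q := by
  induction p generalizing t with
  | nil => rfl
  | cons i p ih =>
    obtain ⟨cs⟩ := t
    cases h : cs[i]? <;> simp [subtree?_cons, h, ih]

theorem pv_append {t s : WTree} {p : List ℕ} (hs : subtree? t p = some s) (q : List ℕ) :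
    pv t (p ++ q) = pv t p * pv s q := by
  induction p generalizing t with
  | nil => cases hs; simp [pv]
  | cons i p ih =>
    obtain ⟨cs⟩ := t
    cases h : cs[i]? with
    | none => simp [subtree?_cons, h] at hs
    | some wc =>
      simp only [subtree?_cons, h, Option.bind_some] at hs
      simp [pv, h, ih hs, mul_assoc]

theorem Unitary.subtree {t s : WTree} {p : List ℕ} (ht : Unitary t)
    (hs : subtree? t p = some s) : Unitary s := fun q cs hq =>
  ht (p ++ q) cs (by rw [subtree?_append, hs]; exact hq)

theorem isLeaf_append {t s : WTree} {p : List ℕ} (hs : subtree? t p = some s) (q : List ℕ) :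
    IsLeaf t (p ++ q) ↔ IsLeaf s q := by
  rw [IsLeaf, IsLeaf, subtree?_append, hs, Option.bind_some]

theorem isLeaf_nil {t : WTree} : IsLeaf t [] ↔ t = node [] :=
  Option.some_inj

theorem isLeaf_cons {cs : List (ℝ × WTree)} {i : ℕ} {r : List ℕ} :
    IsLeaf (node cs) (i :: r) ↔ ∃ hi : i < cs.length, IsLeaf cs[i].2 r := by
  rw [IsLeaf, subtree?_cons]
  by_cases hi : i < cs.length
  · simp [hi, IsLeaf]
  · simp [hi]

theorem mem_leaves {t : WTree} {r : List ℕ} : r ∈ leaves t ↔ IsLeaf t r := by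
  induction t generalizing r with
  | node cs ih =>
    rw [leaves]
    split_ifs with hcs
    · subst hcs
      cases r <;> simp [isLeaf_nil, isLeaf_cons]
    · cases r with
      | nil => simp [isLeaf_nil, hcs]
      | cons i r =>
        simp only [Finset.mem_biUnion, Finset.mem_univ, true_and, Finset.mem_map,
          Function.Embedding.coeFn_mk, List.cons.injEq, isLeaf_cons]
        constructor
        · rintro ⟨j, r', hr', rfl, rfl⟩
          exact ⟨j.isLt, (ih _ (List.getElem_mem _)).1 hr'⟩
        · rintro ⟨hi, hr⟩
          exact ⟨⟨i, hi⟩, r, (ih _ (List.getElem_mem _)).2 hr, rfl, rfl⟩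

theorem Unitary.sum_pv_leaves {t : WTree} (ht : Unitary t) : ∑ r ∈ leaves t, pv t r = 1 := by
  induction t with
  | node cs ih =>
    rw [leaves]
    split_ifs with hcs
    · simp [pv]
    have hdisj : Set.PairwiseDisjoint ↑(Finset.univ : Finset (Fin cs.length))
        fun i : Fin cs.length =>
          (leaves cs[i.val].2).map ⟨(i.val :: ·), List.cons_injective⟩ := by
      intro i _ j _ hij
      simp only [Function.onFun, Finset.disjoint_left, Finset.mem_map]
      rintro _ ⟨r, _, rfl⟩ ⟨r', _, h⟩
      exact hij (Fin.ext (List.cons.inj h).1.symm)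
    calc ∑ r ∈ Finset.univ.biUnion _, pv (node cs) r
        = ∑ i : Fin cs.length, cs[i.val].1 * ∑ r ∈ leaves cs[i.val].2, pv cs[i.val].2 r := by
          rw [Finset.sum_biUnion hdisj]
          simp [pv_cons, Finset.mul_sum]
      _ = ∑ i : Fin cs.length, cs[i.val].1 := by
          refine Finset.sum_congr rfl fun i _ => ?_
          rw [ih _ (List.getElem_mem _) (ht.subtree (p := [i.val]) ?_), mul_one]
          simp [subtree?]
      _ = 1 := by
          rw [Fin.sum_univ_fun_getElem]
          exact (ht [] cs rfl).2 hcs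

theorem Unitary.sum_pv_leaves_below {t : WTree} (ht : Unitary t) {a : List ℕ} (ha : IsNode t a)
    {S : Finset (List ℕ)} (hS : ∀ p, p ∈ S ↔ IsLeaf t p ∧ a <+: p) :
    ∑ p ∈ S, pv t p = pv t a := by
  obtain ⟨s, hs⟩ := Option.isSome_iff_exists.mp ha
  have hS_eq : S = (leaves s).map ⟨(a ++ ·), List.append_right_injective a⟩ := by
    ext p
    simp only [hS, Finset.mem_map, mem_leaves, Function.Embedding.coeFn_mk]
    constructor
    · rintro ⟨hp, r, rfl⟩
      exact ⟨r, (isLeaf_append hs r).1 hp, rfl⟩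
    · rintro ⟨r, hr, rfl⟩
      exact ⟨(isLeaf_append hs r).2 hr, List.prefix_append a r⟩
  rw [hS_eq, Finset.sum_map]
  simp only [Function.Embedding.coeFn_mk, pv_append hs, ← Finset.mul_sum,
    (ht.subtree hs).sum_pv_leaves, mul_one]

theorem Unitary.sum_pv_leaves_below_of_disjoint {t : WTree} (ht : Unitary t)
    {B : Finset (List ℕ)} (hB : ∀ b ∈ B, IsNode t b)
    (hdisj : ∀ p, IsLeaf t p → ∀ a ∈ B, ∀ b ∈ B, a <+: p → b <+: p → a = b)
    {S : Finset (List ℕ)} (hS : ∀ p, p ∈ S ↔ IsLeaf t p ∧ ∃ b ∈ B, b <+: p) :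
    ∑ p ∈ S, pv t p = ∑ b ∈ B, pv t b := by
  classical
  have hS_eq : S = B.biUnion fun b => S.filter (b <+: ·) := by
    ext p
    simp only [Finset.mem_biUnion, Finset.mem_filter]
    exact ⟨fun hp => ((hS p).1 hp).2.imp fun b hb => ⟨hb.1, hp, hb.2⟩,
      fun ⟨_, _, hp, _⟩ => hp⟩
  have hpairwise : Set.PairwiseDisjoint ↑B fun b => S.filter (b <+: ·) := by
    intro a ha b hb hab
    simp only [Function.onFun, Finset.disjoint_left, Finset.mem_filter]
    rintro p ⟨hp, hap⟩ ⟨_, hbp⟩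
    exact hab (hdisj p ((hS p).1 hp).1 a ha b hb hap hbp)
  rw [hS_eq, Finset.sum_biUnion hpairwise]
  refine Finset.sum_congr rfl fun b hb => ht.sum_pv_leaves_below (hB b hb) fun p => ?_
  rw [Finset.mem_filter, hS]
  exact ⟨fun ⟨⟨hp, _⟩, hbp⟩ => ⟨hp, hbp⟩,
    fun ⟨hp, hbp⟩ => ⟨⟨hp, b, hb, hbp⟩, hbp⟩⟩

theorem exists_of_arcWeight_eq_some {t : WTree} {p : List ℕ} {i : ℕ} {w : ℝ}
    (h : arcWeight t p i = some w) :
    ∃ cs, subtree? t p = some (node cs) ∧ ∃ hi : i < cs.length, cs[i].1 = w := by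
  unfold arcWeight at h
  split at h
  · rename_i cs hp
    obtain ⟨wc, hwc, rfl⟩ := Option.map_eq_some_iff.mp h
    obtain ⟨hi, rfl⟩ := List.getElem?_eq_some_iff.mp hwc
    exact ⟨cs, hp, hi, rfl⟩
  · cases h

theorem isNode_of_arcWeight_eq_some {t : WTree} {p : List ℕ} {i : ℕ} {w : ℝ}
    (h : arcWeight t p i = some w) : IsNode t p := by
  obtain ⟨cs, hp, -⟩ := exists_of_arcWeight_eq_some h
  simp [IsNode, hp]

theorem isNode_append_of_arcWeight_eq_some {t : WTree} {p : List ℕ} {i : ℕ} {w : ℝ}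
    (h : arcWeight t p i = some w) : IsNode t (p ++ [i]) := by
  obtain ⟨cs, hp, hi, -⟩ := exists_of_arcWeight_eq_some h
  simp [IsNode, subtree?_append, hp, hi, subtree?]

theorem pv_append_of_arcWeight_eq_some {t : WTree} {p : List ℕ} {i : ℕ} {w : ℝ}
    (h : arcWeight t p i = some w) : pv t (p ++ [i]) = pv t p * w := by
  obtain ⟨cs, hp, hi, rfl⟩ := exists_of_arcWeight_eq_some h
  rw [pv_append hp, pv_cons hi, pv, mul_one]

end WTree

theorem unitary_tree_alpha_beta_general (t : WTree) (ht : Unitary t)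
    (v : ℝ)
    (A : Finset (List ℕ))
    (hdisj : ∀ p, IsLeaf t p → ∀ a ∈ A, ∀ b ∈ A, a <+: p → b <+: p → a = b)
    (c : List ℕ → List ℕ)
    (hc : ∀ a ∈ A, ∃ i : ℕ, c a = a ++ [i] ∧ arcWeight t a i = some v)
    (L La : Finset (List ℕ))
    (hL : ∀ p, p ∈ L ↔ IsLeaf t p ∧ ∃ a ∈ A, a <+: p)
    (hLa : ∀ p, p ∈ La ↔ IsLeaf t p ∧ ∃ a ∈ A, c a <+: p) :
    (∑ p ∈ La, pv t p) = v * (∑ p ∈ L, pv t p) ∧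
    (0 < ∑ p ∈ L, pv t p →
      (∑ p ∈ La, pv t p) / (∑ p ∈ L, pv t p) = v) := by
  classical
  choose i hci hw using hc
  have hpv (a) (ha : a ∈ A) : pv t (c a) = v * pv t a := by
    rw [hci a ha, pv_append_of_arcWeight_eq_some (hw a ha), mul_comm]
  have hc_injOn : Set.InjOn c A := fun a ha b hb hab => by
    simpa [hci a ha, hci b hb] using congrArg List.dropLast hab
  have hbeta : ∑ p ∈ L, pv t p = ∑ a ∈ A, pv t a :=
    ht.sum_pv_leaves_below_of_disjoint (fun a ha => isNode_of_arcWeight_eq_some (hw a ha))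
      hdisj hL
  have halpha : ∑ p ∈ La, pv t p = ∑ b ∈ A.image c, pv t b := by
    refine ht.sum_pv_leaves_below_of_disjoint ?_ ?_ fun p => by simp [hLa]
    · simp only [Finset.forall_mem_image]
      exact fun a ha => hci a ha ▸ isNode_append_of_arcWeight_eq_some (hw a ha)
    · simp only [Finset.forall_mem_image]
      intro p hp a ha b hb hap hbp
      have hprefix (a) (ha : a ∈ A) : a <+: c a := ⟨[i a ha], (hci a ha).symm⟩
      rw [hdisj p hp a ha b hb ((hprefix a ha).trans hap) ((hprefix b hb).trans hbp)]
  have hmain : ∑ p ∈ La, pv t p = v * ∑ p ∈ L, pv t p := by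
    rw [halpha, Finset.sum_image hc_injOn, Finset.sum_congr rfl hpv, hbeta, Finset.mul_sum]
  exact ⟨hmain, fun hpos => by rw [hmain, mul_div_cancel_right₀ v hpos.ne']⟩

/-- Let `t` be a unitary tree, `v ∈ [0,1]`, and `A` a set of nodes of `t` such that no
leaf descends from two distinct members of `A` and every `a ∈ A` has a designated child
`c a` whose connecting arc from `a` is labeled `v`.  Let `beta` (the sum over `L`) be the
sum of the path values of all leaves descending from some member of `A`, and `alpha`
(the sum over `La`) the sum of the path values of all leaves descending from some `c a`
with `a ∈ A`.  Then `alpha = v * beta`; in particular, if `beta > 0` then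
`alpha / beta = v`. -/
theorem unitary_tree_alpha_beta (t : WTree) (ht : Unitary t)
    (v : ℝ) (hv0 : 0 ≤ v) (hv1 : v ≤ 1)
    (A : Finset (List ℕ)) (hA : ∀ a ∈ A, IsNode t a)
    (hdisj : ∀ p, IsLeaf t p → ∀ a ∈ A, ∀ b ∈ A, a <+: p → b <+: p → a = b)
    (c : List ℕ → List ℕ)
    (hc : ∀ a ∈ A, ∃ i : ℕ, c a = a ++ [i] ∧ arcWeight t a i = some v)
    (L La : Finset (List ℕ))
    (hL : ∀ p, p ∈ L ↔ IsLeaf t p ∧ ∃ a ∈ A, a <+: p)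
    (hLa : ∀ p, p ∈ La ↔ IsLeaf t p ∧ ∃ a ∈ A, c a <+: p) :
    (∑ p ∈ La, pv t p) = v * (∑ p ∈ L, pv t p) ∧
    (0 < ∑ p ∈ L, pv t p →
      (∑ p ∈ La, pv t p) / (∑ p ∈ L, pv t p) = v) :=
  unitary_tree_alpha_beta_general t ht v A hdisj c hc L La hL hLa
end

section
/- Conditional Probability in P-log: for every A ⊆ Ω and every B ⊆ Ω with P(B) > 0, the probability obtained by updating with the observation of B equals the classical conditional probability: P_B(A) = P(A ∩ B) / P(B), where P_B(A) = (Σ_{W ∈ A∩B} μ̂(W)) / (Σ_{W ∈ B} μ̂(W)). -/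
/-- The measure of a possible world `W`: its unnormalized probability `μ̂ W`
divided by the sum of the unnormalized probabilities of all possible worlds. -/
noncomputable def mu {Ω : Type*} [Fintype Ω] (muHat : Ω → ℝ) (W : Ω) : ℝ :=
  muHat W / ∑ W' : Ω, muHat W'

/-- The probability of a set `E` of possible worlds: the sum of the measures of
the possible worlds in `E`. -/
noncomputable def Plog {Ω : Type*} [Fintype Ω] (muHat : Ω → ℝ) (E : Finset Ω) : ℝ :=
  ∑ W ∈ E, mu muHat W

/-- Conditional Probability in P-log: for every `A ⊆ Ω` and `B ⊆ Ω` with `P B > 0`,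
the probability obtained by updating with the observation of `B`, namely
`P_B(A) = (Σ_{W ∈ A ∩ B} μ̂ W) / (Σ_{W ∈ B} μ̂ W)`, equals the classical conditional
probability `P (A ∩ B) / P B`. -/
theorem plog_conditional {Ω : Type*} [Fintype Ω] [DecidableEq Ω] (muHat : Ω → ℝ)
    (hnn : ∀ W, 0 ≤ muHat W) (hpos : 0 < ∑ W : Ω, muHat W)
    (A B : Finset Ω) (hB : 0 < Plog muHat B) :
    (∑ W ∈ A ∩ B, muHat W) / (∑ W ∈ B, muHat W) = Plog muHat (A ∩ B) / Plog muHat B := by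
  have hS : (∑ W : Ω, muHat W) ≠ 0 := ne_of_gt hpos
  simp only [Plog, mu, ← Finset.sum_div]
  field_simp
end

section
/- Bayesian network factorization (used with the empty intervention in the proof of the truncated factorization proposition): let P be a probability mass function on D_1 × ⋯ × D_k that is compatible with a DAG G on {1, …, k}, and let x be a full assignment such that P(pa(i) = x|_{pa(i)}) > 0 for every i ∈ {1, …, k}. Then P(x) = Π_{i=1}^k P(v_i = x_i ∧ pa(i) = x|_{pa(i)}) / P(pa(i) = x|_{pa(i)}), i.e. the joint probability of x equals the product over all i of the conditional probability of v_i = x_i given the assignment x makes to the parents of i. -/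
noncomputable section

variable {k : ℕ}

/-- The parents of a node `i` in the DAG given by the edge relation `E`. -/
def pa (E : Fin k → Fin k → Prop) [DecidableRel E] (i : Fin k) : Finset (Fin k) :=
  Finset.univ.filter fun j => E j i

variable {D : Fin k → Type} [∀ i, Fintype (D i)] [∀ i, DecidableEq (D i)]

/-- `P(S = s)`: the probability of the event that a full assignment agrees with `s`
on the set `S` of indices. -/
def prOn (P : (∀ i, D i) → ℝ) (S : Finset (Fin k)) (s : ∀ i, D i) : ℝ :=
  ∑ x ∈ Finset.univ.filter (fun x : ∀ i, D i => ∀ j ∈ S, x j = s j), P x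

/-- `P(v_i = y ∧ S = s)`. -/
def prValOn (P : (∀ i, D i) → ℝ) (i : Fin k) (y : D i)
    (S : Finset (Fin k)) (s : ∀ i, D i) : ℝ :=
  ∑ x ∈ Finset.univ.filter (fun x : ∀ i, D i => x i = y ∧ ∀ j ∈ S, x j = s j), P x

/-- `P(v_i = y ∧ N = w ∧ S = s)`. -/
def prValOn2 (P : (∀ i, D i) → ℝ) (i : Fin k) (y : D i)
    (N : Finset (Fin k)) (w : ∀ i, D i)
    (S : Finset (Fin k)) (s : ∀ i, D i) : ℝ :=
  ∑ x ∈ Finset.univ.filter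
      (fun x : ∀ i, D i => x i = y ∧ (∀ j ∈ N, x j = w j) ∧ ∀ j ∈ S, x j = s j), P x

/-- `P(N = w ∧ S = s)`. -/
def prOn2 (P : (∀ i, D i) → ℝ)
    (N : Finset (Fin k)) (w : ∀ i, D i)
    (S : Finset (Fin k)) (s : ∀ i, D i) : ℝ :=
  ∑ x ∈ Finset.univ.filter
      (fun x : ∀ i, D i => (∀ j ∈ N, x j = w j) ∧ ∀ j ∈ S, x j = s j), P x

/-- `P` is compatible with the DAG `G` given by edge relation `E`: every variable is
independent of its nondescendants given its parents, stated multiplicatively to avoid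
division: for every `i`, every `y ∈ D i`, every set `N` of nondescendants of `i`
disjoint from `pa i`, every assignment `s` on `pa i`, and every assignment `w` on `N`,
`P(v_i = y ∧ N = w ∧ pa i = s) * P(pa i = s) = P(v_i = y ∧ pa i = s) * P(N = w ∧ pa i = s)`. -/
def Compatible (P : (∀ i, D i) → ℝ) (E : Fin k → Fin k → Prop) [DecidableRel E] : Prop :=
  ∀ (i : Fin k) (y : D i) (N : Finset (Fin k)),
    (∀ j ∈ N, j ≠ i ∧ ¬ Relation.TransGen E i j) →
    (∀ j ∈ N, j ∉ pa E i) →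
    ∀ s w : ∀ j, D j,
      prValOn2 P i y N w (pa E i) s * prOn P (pa E i) s
        = prValOn P i y (pa E i) s * prOn2 P N w (pa E i) s

end

/-- Bayesian network factorization: if the probability mass function `P` on
`D_1 × ⋯ × D_k` is compatible with the DAG on `{1,…,k}` whose (acyclic) edge relation
is `E`, and `x` is a full assignment with `P(pa i = x|_{pa i}) > 0` for every `i`, then
`P x = Π_i P(v_i = x_i ∧ pa i = x|_{pa i}) / P(pa i = x|_{pa i})`. -/
theorem bayes_net_factorization (k : ℕ) (hk : 1 ≤ k) (D : Fin k → Type)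
    [∀ i, Fintype (D i)] [∀ i, Nonempty (D i)] [∀ i, DecidableEq (D i)]
    (E : Fin k → Fin k → Prop) [DecidableRel E]
    (hacyc : ∀ i, ¬ Relation.TransGen E i i)
    (P : (∀ i, D i) → ℝ)
    (hnn : ∀ x, 0 ≤ P x) (hsum : ∑ x : ∀ i, D i, P x = 1)
    (hcompat : Compatible P E)
    (x : ∀ i, D i)
    (hpos : ∀ i, 0 < prOn P (pa E i) x) :
    P x = ∏ i : Fin k, prValOn P i (x i) (pa E i) x / prOn P (pa E i) x := by
  classical
  set c : Fin k → ℝ := fun i => prValOn P i (x i) (pa E i) x / prOn P (pa E i) x with hc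
  have hirr : ∀ i, ¬ E i i := fun i h => hacyc i (Relation.TransGen.single h)
  -- existence of a "maximal" element in a nonempty set
  have hwf : WellFounded (fun a b : Fin k => Relation.TransGen E b a) := by
    have : IsTrans (Fin k) (fun a b : Fin k => Relation.TransGen E b a) :=
      ⟨fun a b c hab hbc => hbc.trans hab⟩
    have : IsIrrefl (Fin k) (fun a b : Fin k => Relation.TransGen E b a) :=
      ⟨fun a h => hacyc a h⟩
    exact Finite.wellFounded_of_trans_of_irrefl _
  have key : ∀ n (S : Finset (Fin k)), S.card ≤ n →
      (∀ i ∈ S, ∀ j, E j i → j ∈ S) →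
      prOn P S x = ∏ i ∈ S, c i := by
    intro n
    induction n with
    | zero =>
      intro S hS _
      have : S = ∅ := Finset.card_eq_zero.mp (Nat.le_zero.mp hS)
      subst this
      simpa [prOn] using hsum
    | succ n ih =>
      intro S hS hclosed
      rcases S.eq_empty_or_nonempty with rfl | hne
      · simpa [prOn] using hsum
      · obtain ⟨i, hiS, hmax⟩ := hwf.has_min S hne
        -- hmax : ∀ j ∈ S, ¬ Relation.TransGen E i j
        set S' : Finset (Fin k) := S.erase i with hS'
        have hpa : pa E i ⊆ S' := by
          intro j hj
          have hEji : E j i := by simpa [pa] using hj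
          have hjS : j ∈ S := hclosed i hiS j hEji
          have hji : j ≠ i := by
            rintro rfl; exact hirr j hEji
          exact Finset.mem_erase.mpr ⟨hji, hjS⟩
        set N : Finset (Fin k) := S' \ pa E i with hN
        have hunion : N ∪ pa E i = S' := Finset.sdiff_union_of_subset hpa
        have hSrep : S = insert i (N ∪ pa E i) := by
          rw [hunion, hS', Finset.insert_erase hiS]
        have hN1 : ∀ j ∈ N, j ≠ i ∧ ¬ Relation.TransGen E i j := by
          intro j hj
          have hjS' : j ∈ S' := (Finset.mem_sdiff.mp hj).1
          have hjS : j ∈ S := Finset.mem_of_mem_erase hjS'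
          exact ⟨(Finset.mem_erase.mp hjS').1, hmax j hjS⟩
        have hN2 : ∀ j ∈ N, j ∉ pa E i := fun j hj => (Finset.mem_sdiff.mp hj).2
        have compat := hcompat i (x i) N hN1 hN2 x x
        have e1 : prValOn2 P i (x i) N x (pa E i) x = prOn P S x := by
          unfold prValOn2 prOn
          apply Finset.sum_congr _ (fun _ _ => rfl)
          apply Finset.filter_congr
          intro y _
          simp [hSrep, Finset.mem_insert, Finset.mem_union, or_imp, forall_and, and_assoc]
        have e2 : prOn2 P N x (pa E i) x = prOn P S' x := by
          unfold prOn2 prOn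
          apply Finset.sum_congr _ (fun _ _ => rfl)
          apply Finset.filter_congr
          intro y _
          simp [← hunion, Finset.mem_union, or_imp, forall_and]
        rw [e1, e2] at compat
        have hS'closed : ∀ a ∈ S', ∀ j, E j a → j ∈ S' := by
          intro a ha j hja
          have haS : a ∈ S := Finset.mem_of_mem_erase ha
          have hjS : j ∈ S := hclosed a haS j hja
          refine Finset.mem_erase.mpr ⟨?_, hjS⟩
          rintro rfl
          exact hmax a haS (Relation.TransGen.single hja)
        have hcard : S'.card ≤ n := by
          have h1 : 1 ≤ S.card := Finset.card_pos.mpr hne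
          have h2 := Finset.card_erase_of_mem hiS
          rw [← hS'] at h2
          omega
        have hih := ih S' hcard hS'closed
        have hprod : ∏ j ∈ S, c j = c i * ∏ j ∈ S', c j :=
          (Finset.mul_prod_erase S c hiS).symm
        rw [hprod, ← hih, hc]
        have hp : prOn P (pa E i) x ≠ 0 := (hpos i).ne'
        field_simp
        linarith [compat]
  have huniv : prOn P Finset.univ x = P x := by
    unfold prOn
    have hfil : (Finset.univ.filter fun y : ∀ i, D i => ∀ j ∈ Finset.univ, y j = x j)
        = {x} := by
      ext y
      simp [funext_iff]
    rw [hfil, Finset.sum_singleton]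
  have := key k Finset.univ (by simp) (fun _ _ j _ => Finset.mem_univ j)
  rw [huniv] at this
  simpa [hc] using this
end

section
/- Truncated factorization for causal Bayesian networks: suppose G is a causal Bayesian network compatible with the interventional distribution P*, r is an intervention, and x is a full assignment consistent with r (x_i = r(i) for every i ∈ dom(r)). Assume P_r(pa(i) = x|_{pa(i)}) > 0 for every i ∈ {1, …, k}, and P_∅(pa(i) = x|_{pa(i)}) > 0 for every i ∉ dom(r), where ∅ is the empty intervention. Then P_r(x) = Π_{i ∉ dom(r)} P_∅(v_i = x_i ∧ pa(i) = x|_{pa(i)}) / P_∅(pa(i) = x|_{pa(i)}), i.e. the interventional probability of x is the product, over the unmanipulated variables, of their pre-intervention conditional probabilities given their parents. -/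
noncomputable section

variable {k : ℕ} {D : Fin k → Type} [∀ i, Fintype (D i)] [∀ i, DecidableEq (D i)]

/-- `P(v_i = y)`. -/
def prVal (P : (∀ i, D i) → ℝ) (i : Fin k) (y : D i) : ℝ :=
  ∑ x ∈ Finset.univ.filter (fun x : ∀ i, D i => x i = y), P x

/-- An intervention is a partial assignment, represented as a function assigning
`some` value to the manipulated variables and `none` to the others.  The empty
intervention is `fun _ => none`.

`G` (with edge relation `E`) is a causal Bayesian network compatible with the
interventional distribution `Pstar` if for every intervention `r`:
(1) `P_r` is compatible with `G`;
(2) `P_r(v_i = r i) = 1` for every `i ∈ dom r`; and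
(3) for every `i ∉ dom r`, every assignment `s` on `pa i` consistent with `r`, and
every `y ∈ D i`, whenever `P_r(pa i = s) > 0` and `P_∅(pa i = s) > 0`,
`P_r(v_i = y ∧ pa i = s)/P_r(pa i = s) = P_∅(v_i = y ∧ pa i = s)/P_∅(pa i = s)`. -/
def IsCausalBayesNet (Pstar : (∀ i, Option (D i)) → ((∀ i, D i) → ℝ))
    (E : Fin k → Fin k → Prop) [DecidableRel E] : Prop :=
  ∀ r : ∀ i, Option (D i),
    Compatible (Pstar r) E ∧
    (∀ i y, r i = some y → prVal (Pstar r) i y = 1) ∧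
    (∀ i, r i = none → ∀ (y : D i) (s : ∀ j, D j),
      (∀ j ∈ pa E i, ∀ z, r j = some z → s j = z) →
      0 < prOn (Pstar r) (pa E i) s →
      0 < prOn (Pstar (fun _ => none)) (pa E i) s →
      prValOn (Pstar r) i y (pa E i) s / prOn (Pstar r) (pa E i) s
        = prValOn (Pstar (fun _ => none)) i y (pa E i) s
            / prOn (Pstar (fun _ => none)) (pa E i) s)

end

section AuxTF
set_option linter.unusedSectionVars false

variable {k : ℕ} {D : Fin k → Type} [∀ i, Fintype (D i)] [∀ i, DecidableEq (D i)]
variable {E : Fin k → Fin k → Prop} [DecidableRel E]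

lemma exists_maximal_tf (hacyc : ∀ i, ¬ Relation.TransGen E i i)
    (S : Finset (Fin k)) (hS : S.Nonempty) :
    ∃ i ∈ S, ∀ j ∈ S, ¬ Relation.TransGen E i j := by
  classical
  obtain ⟨i, hi, hmin⟩ := S.exists_min_image
    (fun i => (S.filter (fun j => Relation.TransGen E i j)).card) hS
  refine ⟨i, hi, fun j hj hij => ?_⟩
  have hsub : S.filter (fun l => Relation.TransGen E j l)
      ⊂ S.filter (fun l => Relation.TransGen E i l) := by
    constructor
    · intro l hl
      simp only [Finset.mem_filter] at *
      exact ⟨hl.1, hij.trans hl.2⟩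
    · intro hsub'
      have h2 := hsub' (Finset.mem_filter.mpr ⟨hj, hij⟩)
      simp only [Finset.mem_filter] at h2
      exact hacyc j h2.2
  have h3 := Finset.card_lt_card hsub
  have h4 := hmin j hj
  omega

lemma chain_rule_tf (P : (∀ i, D i) → ℝ) (hcomp : Compatible P E)
    (hacyc : ∀ i, ¬ Relation.TransGen E i i)
    (hsum : ∑ x : ∀ i, D i, P x = 1)
    (x : ∀ i, D i)
    (S : Finset (Fin k))
    (hclosed : ∀ i ∈ S, pa E i ⊆ S)
    (hpos : ∀ i ∈ S, 0 < prOn P (pa E i) x) :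
    prOn P S x = ∏ i ∈ S, prValOn P i (x i) (pa E i) x / prOn P (pa E i) x := by
  classical
  induction S using Finset.strongInduction with
  | _ S ih =>
    rcases S.eq_empty_or_nonempty with rfl | hS
    · simp [prOn, hsum]
    obtain ⟨i, hiS, hmax⟩ := exists_maximal_tf hacyc S hS
    set S' := S.erase i with hS'
    have hinotpa : i ∉ pa E i := by
      simp only [pa, Finset.mem_filter]
      rintro ⟨-, h⟩
      exact hacyc i (Relation.TransGen.single h)
    have hpaS : pa E i ⊆ S := hclosed i hiS
    set N := S' \ pa E i with hN
    have hNsub : ∀ j ∈ N, j ∈ S' := fun j hj => (Finset.mem_sdiff.mp hj).1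
    have hcompat := hcomp i (x i) N
      (fun j hj => ⟨Finset.ne_of_mem_erase (hNsub j hj),
        hmax j (Finset.mem_of_mem_erase (hNsub j hj))⟩)
      (fun j hj => (Finset.mem_sdiff.mp hj).2) x x
    -- event identifications
    have hev1 : prValOn2 P i (x i) N x (pa E i) x = prOn P S x := by
      unfold prValOn2 prOn
      apply Finset.sum_congr
      · apply Finset.filter_congr
        intro y _
        constructor
        · rintro ⟨h1, h2, h3⟩ j hj
          by_cases hji : j = i
          · subst hji; exact h1
          by_cases hjp : j ∈ pa E i
          · exact h3 j hjp
          · exact h2 j (Finset.mem_sdiff.mpr ⟨Finset.mem_erase.mpr ⟨hji, hj⟩, hjp⟩)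
        · intro h
          exact ⟨h i hiS, fun j hj => h j (Finset.mem_of_mem_erase (hNsub j hj)),
            fun j hj => h j (hpaS hj)⟩
      · intros; rfl
    have hev2 : prOn2 P N x (pa E i) x = prOn P S' x := by
      unfold prOn2 prOn
      apply Finset.sum_congr
      · apply Finset.filter_congr
        intro y _
        constructor
        · rintro ⟨h2, h3⟩ j hj
          by_cases hjp : j ∈ pa E i
          · exact h3 j hjp
          · exact h2 j (Finset.mem_sdiff.mpr ⟨hj, hjp⟩)
        · intro h
          refine ⟨fun j hj => h j (hNsub j hj), fun j hj => ?_⟩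
          have hji : j ≠ i := fun e => hinotpa (e ▸ hj)
          exact h j (Finset.mem_erase.mpr ⟨hji, hpaS hj⟩)
      · intros; rfl
    rw [hev1, hev2] at hcompat
    have hclosed' : ∀ j ∈ S', pa E j ⊆ S' := by
      intro j hj l hl
      have hjS := Finset.mem_of_mem_erase hj
      have hlS : l ∈ S := hclosed j hjS hl
      refine Finset.mem_erase.mpr ⟨?_, hlS⟩
      rintro rfl
      exact hmax j hjS (Relation.TransGen.single ((Finset.mem_filter.mp hl).2))
    have hIH := ih S' (Finset.erase_ssubset hiS) hclosed'
      (fun j hj => hpos j (Finset.mem_of_mem_erase hj))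
    have hpai := hpos i hiS
    have hprod : ∏ j ∈ S, prValOn P j (x j) (pa E j) x / prOn P (pa E j) x
        = (prValOn P i (x i) (pa E i) x / prOn P (pa E i) x)
          * ∏ j ∈ S', prValOn P j (x j) (pa E j) x / prOn P (pa E j) x := by
      exact (Finset.mul_prod_erase S (fun j => prValOn P j (x j) (pa E j) x / prOn P (pa E j) x) hiS).symm
    rw [hprod, ← hIH]
    field_simp at hcompat ⊢
    linarith [hcompat]

end AuxTF

/-- Truncated factorization for causal Bayesian networks: if `G` (edge relation `E`,
acyclic) is a causal Bayesian network compatible with the interventional distribution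
`Pstar`, `r` is an intervention, `x` is a full assignment consistent with `r`,
`P_r(pa i = x|_{pa i}) > 0` for every `i`, and `P_∅(pa i = x|_{pa i}) > 0` for every
`i ∉ dom r`, then `P_r(x)` equals the product over the unmanipulated variables `i` of
`P_∅(v_i = x_i ∧ pa i = x|_{pa i}) / P_∅(pa i = x|_{pa i})`. -/
theorem truncated_factorization (k : ℕ) (hk : 1 ≤ k) (D : Fin k → Type)
    [∀ i, Fintype (D i)] [∀ i, Nonempty (D i)] [∀ i, DecidableEq (D i)]
    (E : Fin k → Fin k → Prop) [DecidableRel E]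
    (hacyc : ∀ i, ¬ Relation.TransGen E i i)
    (Pstar : (∀ i, Option (D i)) → ((∀ i, D i) → ℝ))
    (hpmf : ∀ r, (∀ x, 0 ≤ Pstar r x) ∧ ∑ x : ∀ i, D i, Pstar r x = 1)
    (hcbn : IsCausalBayesNet Pstar E)
    (r : ∀ i, Option (D i))
    (x : ∀ i, D i)
    (hcons : ∀ i y, r i = some y → x i = y)
    (hposr : ∀ i, 0 < prOn (Pstar r) (pa E i) x)
    (hpos0 : ∀ i, r i = none → 0 < prOn (Pstar (fun _ => none)) (pa E i) x) :
    Pstar r x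
      = ∏ i ∈ Finset.univ.filter (fun i : Fin k => r i = none),
          prValOn (Pstar (fun _ => none)) i (x i) (pa E i) x
            / prOn (Pstar (fun _ => none)) (pa E i) x := by
  classical
  obtain ⟨hnn, hsum⟩ := hpmf r
  obtain ⟨hcomp, h2, h3⟩ := hcbn r
  have hchain := chain_rule_tf (Pstar r) hcomp hacyc hsum x Finset.univ
    (fun i _ => Finset.subset_univ _) (fun i _ => hposr i)
  have huniv : prOn (Pstar r) Finset.univ x = Pstar r x := by
    unfold prOn
    rw [show Finset.univ.filter (fun x' : ∀ i, D i => ∀ j ∈ Finset.univ, x' j = x j)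
        = {x} from ?_]
    · simp
    · ext y; simp [funext_iff]
  rw [← huniv, hchain, Finset.prod_filter]
  apply Finset.prod_congr rfl
  intro i _
  by_cases hri : r i = none
  · rw [if_pos hri]
    exact h3 i hri (x i) x (fun j _ z hz => hcons j z hz) (hposr i) (hpos0 i hri)
  · rw [if_neg hri]
    obtain ⟨y, hy⟩ := Option.ne_none_iff_exists'.mp hri
    have h1 := h2 i y hy
    have hzero : ∀ x' : ∀ j, D j, x' i ≠ y → Pstar r x' = 0 := by
      intro x' hx'
      have hsplit : ∑ z : ∀ j, D j, Pstar r z =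
          prVal (Pstar r) i y
            + ∑ z ∈ Finset.univ.filter (fun z : ∀ j, D j => ¬ z i = y), Pstar r z := by
        unfold prVal
        rw [← Finset.sum_filter_add_sum_filter_not Finset.univ (fun z : ∀ j, D j => z i = y)]
      have hz0 : ∑ z ∈ Finset.univ.filter (fun z : ∀ j, D j => ¬ z i = y), Pstar r z = 0 := by
        rw [hsum, h1] at hsplit; linarith
      exact (Finset.sum_eq_zero_iff_of_nonneg (fun z _ => hnn z)).mp hz0 x' (by simp [hx'])
    have heq : prValOn (Pstar r) i (x i) (pa E i) x = prOn (Pstar r) (pa E i) x := by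
      unfold prValOn prOn
      rw [hcons i y hy]
      apply Finset.sum_subset
      · intro z hz
        simp only [Finset.mem_filter] at *
        exact ⟨hz.1, hz.2.2⟩
      · intro z hz hz2
        simp only [Finset.mem_filter, Finset.mem_univ, true_and] at hz hz2
        exact hzero z (fun h => hz2 ⟨h, hz⟩)
    rw [heq, div_self (ne_of_gt (hposr i))]
end
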